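/- arXiv:2502.01409 — 6 statements merged into one kernel-verified Lean document; each statement's English description precedes it below -/
import Mathlib

section
/- If {a_1, ..., a_r} is a set of distinct positive integers none of which is divisible by 3, with 1/a_1 + ... + 1/a_r = 1, then a_1 + ... + a_r ≡ 1 (mod 3). -/
/-! Clearing denominators turns `∑ 1/a = 1` into an identity between natural numbers, so it
also holds in `ZMod 3`, where all `a` are units. Every unit of `ZMod 3` is its own inverse,
hence `∑ a = ∑ a⁻¹ = 1` in `ZMod 3`. -/

theorem Finset.prod_mul_sum_inv {ι K : Type*} [Semifield K] [DecidableEq ι] {s : Finset ι}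
    {f : ι → K} (hf : ∀ i ∈ s, f i ≠ 0) :
    (∏ i ∈ s, f i) * ∑ i ∈ s, (f i)⁻¹ = ∑ i ∈ s, ∏ j ∈ s.erase i, f j := by
  rw [Finset.mul_sum]
  refine Finset.sum_congr rfl fun i hi => ?_
  rw [← Finset.mul_prod_erase s f hi, mul_comm (f i), mul_assoc, mul_inv_cancel₀ (hf i hi),
    mul_one]

theorem sum_inv_natCast_eq_one_of_sum_inv_eq_one {K : Type*} [Semifield K] {A : Finset ℕ}
    (hA : ∀ a ∈ A, (a : K) ≠ 0) (h : ∑ a ∈ A, (a : ℚ)⁻¹ = 1) :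
    ∑ a ∈ A, (a : K)⁻¹ = 1 := by
  have hAℚ : ∀ a ∈ A, (a : ℚ) ≠ 0 := fun a ha =>
    Nat.cast_ne_zero.mpr fun h0 => hA a ha (by rw [h0, Nat.cast_zero])
  have hcleared : ∑ a ∈ A, ∏ b ∈ A.erase a, b = ∏ a ∈ A, a := by
    have := Finset.prod_mul_sum_inv hAℚ
    rw [h, mul_one] at this
    rw [← Nat.cast_inj (R := ℚ)]
    push_cast
    exact this.symm
  apply mul_left_cancel₀ (Finset.prod_ne_zero_iff.mpr hA)
  rw [Finset.prod_mul_sum_inv hA, mul_one]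
  simpa only [Nat.cast_sum, Nat.cast_prod] using congrArg (Nat.cast : ℕ → K) hcleared

theorem ZMod.inv_eq_self_of_ne_zero_three (x : ZMod 3) (hx : x ≠ 0) : x⁻¹ = x :=
  inv_eq_of_mul_eq_one_right (by revert x; decide)

theorem three_free_one_partition_sum_mod_three_general (A : Finset ℕ)
    (hfree : ∀ a ∈ A, ¬ (3 ∣ a))
    (hrecip : ∑ a ∈ A, (1 : ℚ) / a = 1) :
    (∑ a ∈ A, a) % 3 = 1 := by
  have hunit : ∀ a ∈ A, (a : ZMod 3) ≠ 0 := fun a ha =>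
    (ZMod.natCast_eq_zero_iff a 3).not.mpr (hfree a ha)
  have hsum : ∑ a ∈ A, (a : ZMod 3)⁻¹ = 1 :=
    sum_inv_natCast_eq_one_of_sum_inv_eq_one hunit (by simpa only [one_div] using hrecip)
  rw [← ZMod.val_natCast, Nat.cast_sum,
    Finset.sum_congr rfl fun a ha => (ZMod.inv_eq_self_of_ne_zero_three _ (hunit a ha)).symm,
    hsum]
  rfl

theorem three_free_one_partition_sum_mod_three (A : Finset ℕ)
    (hpos : ∀ a ∈ A, 0 < a) (hfree : ∀ a ∈ A, ¬ (3 ∣ a))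
    (hrecip : ∑ a ∈ A, (1 : ℚ) / a = 1) :
    (∑ a ∈ A, a) % 3 = 1 :=
  three_free_one_partition_sum_mod_three_general A hfree hrecip
end

section
/- If {a_1, ..., a_r} is a set of distinct odd positive integers with 1/a_1 + ... + 1/a_r = 1, then a_1 + ... + a_r ≡ 1 (mod 8). -/
/-!
Let `N` be the product of the elements of `A`. Clearing denominators in `∑ 1/a = 1` gives
`∑ N/a = N`. Odd squares are `1` mod `8`, so `N/a ≡ (N/a) a² = N a`, whence `N ∑ a ≡ N`, and
multiplying by `N` (again `N² ≡ 1`) yields `∑ a ≡ 1 (mod 8)`.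
-/

theorem Odd.natCast_sq_zmod_eight {a : ℕ} (ha : Odd a) : (a : ZMod 8) ^ 2 = 1 := by
  have h := (ZMod.intCast_zmod_eq_zero_iff_dvd _ 8).2
    (Int.eight_dvd_sq_sub_one_of_odd (ha.natCast (R := ℤ)))
  push_cast at h
  exact sub_eq_zero.mp h

theorem Odd.natCast_div_zmod_eight {a N : ℕ} (ha : Odd a) (hdvd : a ∣ N) :
    ((N / a : ℕ) : ZMod 8) = N * a := by
  calc ((N / a : ℕ) : ZMod 8) = (N / a : ℕ) * (a : ZMod 8) ^ 2 := by
        rw [Odd.natCast_sq_zmod_eight ha, mul_one]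
    _ = ((N / a * a : ℕ) : ZMod 8) * a := by push_cast; ring
    _ = N * a := by rw [Nat.div_mul_cancel hdvd]

theorem Finset.sum_div_eq_self_of_sum_one_div_eq_one {A : Finset ℕ} {N : ℕ}
    (hdvd : ∀ a ∈ A, a ∣ N) (hrecip : ∑ a ∈ A, (1 : ℚ) / a = 1) :
    ∑ a ∈ A, N / a = N := by
  have hℚ : ∑ a ∈ A, ((N / a : ℕ) : ℚ) = N := by
    calc ∑ a ∈ A, ((N / a : ℕ) : ℚ) = ∑ a ∈ A, (N : ℚ) * (1 / a) :=
          Finset.sum_congr rfl fun a ha => by rw [Nat.cast_div_charZero (hdvd a ha)]; ring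
      _ = N := by rw [← Finset.mul_sum, hrecip, mul_one]
  exact_mod_cast hℚ

theorem odd_one_partition_sum_mod_eight_general (A : Finset ℕ)
    (hodd : ∀ a ∈ A, Odd a)
    (hrecip : ∑ a ∈ A, (1 : ℚ) / a = 1) :
    (∑ a ∈ A, a) % 8 = 1 := by
  set N := ∏ a ∈ A, a
  have hdvd : ∀ a ∈ A, a ∣ N := fun a ha => Finset.dvd_prod_of_mem _ ha
  have hNsq : (N : ZMod 8) ^ 2 = 1 :=
    Odd.natCast_sq_zmod_eight (Finset.prod_induction _ Odd (fun _ _ => Odd.mul) odd_one hodd)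
  have hkey : (N : ZMod 8) * ∑ a ∈ A, (a : ZMod 8) = N := by
    have h := congrArg (Nat.cast : ℕ → ZMod 8)
      (Finset.sum_div_eq_self_of_sum_one_div_eq_one hdvd hrecip)
    rwa [Nat.cast_sum, Finset.sum_congr rfl fun a ha =>
      Odd.natCast_div_zmod_eight (hodd a ha) (hdvd a ha), ← Finset.mul_sum] at h
  have hsum : ((∑ a ∈ A, a : ℕ) : ZMod 8) = 1 := by
    calc ((∑ a ∈ A, a : ℕ) : ZMod 8) = (N : ZMod 8) ^ 2 * ∑ a ∈ A, (a : ZMod 8) := by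
          rw [hNsq, one_mul, Nat.cast_sum]
      _ = 1 := by rw [sq, mul_assoc, hkey, ← sq, hNsq]
  rw [← ZMod.val_natCast, hsum]; rfl

theorem odd_one_partition_sum_mod_eight (A : Finset ℕ)
    (hpos : ∀ a ∈ A, 0 < a) (hodd : ∀ a ∈ A, Odd a)
    (hrecip : ∑ a ∈ A, (1 : ℚ) / a = 1) :
    (∑ a ∈ A, a) % 8 = 1 :=
  odd_one_partition_sum_mod_eight_general A hodd hrecip
end

section
/- More generally, let α be a positive rational and let {a_1, ..., a_r} be distinct positive integers, all odd, with 1/a_1 + ... + 1/a_r = α and a_1 + ... + a_r = n. Write α = p/q in lowest terms; then q is odd and n·q ≡ p (mod 8). -/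
/-!
Clear denominators with the odd number `L = ∏ a`: then `L * α = S` with `S = ∑ L / a`, so the
reduced denominator of `α` divides `L` and is odd. Every odd number squares to `1` mod 8, so
`L / a ≡ L * a` and hence `S ≡ L * n (mod 8)`. Comparing with `S * den = L * num` and cancelling
the unit `L` gives `n * den ≡ num (mod 8)`.
-/

theorem ZMod.natCast_mul_self_eq_one_of_odd {a : ℕ} (ha : Odd a) : (a : ZMod 8) * a = 1 := by
  have h : a % 8 = 1 ∨ a % 8 = 3 ∨ a % 8 = 5 ∨ a % 8 = 7 := by
    rcases ha with ⟨k, rfl⟩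
    omega
  rw [← ZMod.natCast_mod a 8]
  rcases h with h | h | h | h <;> rw [h] <;> decide

theorem ZMod.natCast_div_eq_mul_of_odd {a L : ℕ} (ha : Odd a) (hdvd : a ∣ L) :
    ((L / a : ℕ) : ZMod 8) = L * a := by
  conv_rhs => rw [← Nat.div_mul_cancel hdvd]
  rw [Nat.cast_mul, mul_assoc, ZMod.natCast_mul_self_eq_one_of_odd ha, mul_one]

theorem Rat.den_dvd_of_natCast_mul_eq {q : ℚ} {L : ℕ} {S : ℤ} (hL : L ≠ 0)
    (h : (L : ℚ) * q = S) : q.den ∣ L := by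
  have hq : q = Rat.divInt S L := by
    rw [Rat.divInt_eq_div, ← h]
    push_cast
    field_simp
  exact Int.natCast_dvd_natCast.mp (hq ▸ Rat.den_dvd S L)

section ClearDenominators

variable {A : Finset ℕ} {L : ℕ}

theorem natCast_sum_div_eq_mul_sum_inv (hdvd : ∀ a ∈ A, a ∣ L) :
    ((∑ a ∈ A, L / a : ℕ) : ℚ) = L * ∑ a ∈ A, (1 : ℚ) / a := by
  rw [Nat.cast_sum, Finset.mul_sum]
  refine Finset.sum_congr rfl fun a ha => ?_
  rw [Nat.cast_div_charZero (hdvd a ha), mul_one_div]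

theorem ZMod.natCast_sum_div_eq_mul_sum_of_odd (hodd : ∀ a ∈ A, Odd a)
    (hdvd : ∀ a ∈ A, a ∣ L) :
    ((∑ a ∈ A, L / a : ℕ) : ZMod 8) = L * ∑ a ∈ A, a := by
  push_cast [Finset.mul_sum]
  exact Finset.sum_congr rfl fun a ha => ZMod.natCast_div_eq_mul_of_odd (hodd a ha) (hdvd a ha)

end ClearDenominators

theorem odd_alpha_partition_mod_eight_general (α : ℚ)
    (A : Finset ℕ) (n : ℕ)
    (hodd : ∀ a ∈ A, Odd a)
    (hrecip : ∑ a ∈ A, (1 : ℚ) / a = α)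
    (hsum : ∑ a ∈ A, a = n) :
    Odd α.den ∧ (n * α.den : ℤ) ≡ α.num [ZMOD 8] := by
  set L := ∏ a ∈ A, a
  have hL : Odd L := Finset.prod_induction _ Odd (fun _ _ => Odd.mul) odd_one hodd
  have hdvd : ∀ a ∈ A, a ∣ L := fun a ha => Finset.dvd_prod_of_mem _ ha
  set S := ∑ a ∈ A, L / a
  have hclear : (S : ℚ) = L * α := hrecip ▸ natCast_sum_div_eq_mul_sum_inv hdvd
  have hden : α.den ∣ L :=
    Rat.den_dvd_of_natCast_mul_eq hL.pos.ne' (by exact_mod_cast hclear.symm)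
  refine ⟨hL.of_dvd_nat hden, ?_⟩
  have hcross : (S : ℤ) * α.den = L * α.num := by
    have : (S : ℚ) * α.den = L * α.num := by rw [hclear, mul_assoc, Rat.mul_den_eq_num]
    exact_mod_cast this
  have hS : (S : ZMod 8) = L * n := hsum ▸ ZMod.natCast_sum_div_eq_mul_sum_of_odd hodd hdvd
  have hLunit : IsUnit (L : ZMod 8) := .of_mul_eq_one _ (ZMod.natCast_mul_self_eq_one_of_odd hL)
  refine (ZMod.intCast_eq_intCast_iff _ _ 8).mp ?_
  apply hLunit.mul_left_cancel
  have hcross8 := congrArg (Int.cast : ℤ → ZMod 8) hcross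
  push_cast at hcross8 ⊢
  rw [← hcross8, hS, mul_assoc]

theorem odd_alpha_partition_mod_eight (α : ℚ) (hα : 0 < α)
    (A : Finset ℕ) (n : ℕ)
    (hpos : ∀ a ∈ A, 0 < a) (hodd : ∀ a ∈ A, Odd a)
    (hrecip : ∑ a ∈ A, (1 : ℚ) / a = α)
    (hsum : ∑ a ∈ A, a = n) :
    Odd α.den ∧ (n * α.den : ℤ) ≡ α.num [ZMOD 8] :=
  odd_alpha_partition_mod_eight_general α A n hodd hrecip hsum
end

section
/- Let α be a positive rational and {a_1, ..., a_r} distinct positive integers none divisible by 3, with 1/a_1 + ... + 1/a_r = α and a_1 + ... + a_r = n. Write α = p/q in lowest terms; then 3 does not divide q and n·q ≡ p (mod 3). -/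
/-!
Each `1/a` has denominator `a`, prime to 3, so reduction modulo 3 is defined and additive on
these fractions and on their sum `α`. In `ZMod 3` every element is its own inverse, so
`1/a ≡ a` and hence `α ≡ ∑ a = n`, which says `num α ≡ n * den α (mod 3)`.
-/

namespace Rat

lemma intCast_num_eq_mul_den_of_cast_eq {K : Type*} [DivisionRing K] {q : ℚ} {x : K}
    (hq : (q.den : K) ≠ 0) (h : (q : K) = x) :
    (q.num : K) = x * q.den := by
  rw [← h, cast_def, div_mul_cancel₀ _ hq]

variable {K : Type*} [Field K] {ι : Type*} {s : Finset ι} {f : ι → ℚ}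

lemma natCast_den_sum_ne_zero (hf : ∀ i ∈ s, ((f i).den : K) ≠ 0) :
    ((∑ i ∈ s, f i).den : K) ≠ 0 :=
  ne_zero_of_dvd_ne_zero (by rw [Nat.cast_prod]; exact Finset.prod_ne_zero_iff.mpr hf)
    (Nat.cast_dvd_cast (Finset.Rat.den_sum_dvd_prod_den s f))

lemma cast_sum_of_den_ne_zero (hf : ∀ i ∈ s, ((f i).den : K) ≠ 0) :
    ((∑ i ∈ s, f i : ℚ) : K) = ∑ i ∈ s, (f i : K) := by
  classical
  induction s using Finset.induction_on with
  | empty => simp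
  | insert a s has ih =>
    have hf' : ∀ i ∈ s, ((f i).den : K) ≠ 0 := fun i hi => hf i (Finset.mem_insert_of_mem hi)
    rw [Finset.sum_insert has, Finset.sum_insert has,
      cast_add_of_ne_zero (hf a (Finset.mem_insert_self a s)) (natCast_den_sum_ne_zero hf'), ih hf']

end Rat

lemma ZMod.inv_eq_self_of_three (x : ZMod 3) : x⁻¹ = x := by
  rcases eq_or_ne x 0 with rfl | hx
  · exact ZMod.inv_zero 3
  · exact inv_eq_of_mul_eq_one_right <| by simpa [sq] using ZMod.pow_card_sub_one_eq_one hx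

theorem three_free_alpha_partition_mod_three_general (α : ℚ)
    (A : Finset ℕ) (n : ℕ)
    (hfree : ∀ a ∈ A, ¬ (3 ∣ a))
    (hrecip : ∑ a ∈ A, (1 : ℚ) / a = α)
    (hsum : ∑ a ∈ A, a = n) :
    ¬ (3 ∣ α.den) ∧ (n * α.den : ℤ) ≡ α.num [ZMOD 3] := by
  have hden : ∀ a ∈ A, (((1 : ℚ) / a).den : ZMod 3) ≠ 0 := by
    intro a ha
    have ha0 : a ≠ 0 := by rintro rfl; exact hfree 0 ha (dvd_zero 3)
    rw [one_div, Rat.inv_natCast_den, if_neg ha0, Ne, ZMod.natCast_eq_zero_iff]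
    exact hfree a ha
  have hαden : (α.den : ZMod 3) ≠ 0 := hrecip ▸ Rat.natCast_den_sum_ne_zero hden
  have hαcast : (α : ZMod 3) = n := by
    rw [← hrecip, Rat.cast_sum_of_den_ne_zero hden, ← hsum, Nat.cast_sum]
    refine Finset.sum_congr rfl fun a _ => ?_
    rw [one_div, Rat.cast_inv_nat, ZMod.inv_eq_self_of_three]
  refine ⟨fun h => hαden ((ZMod.natCast_eq_zero_iff _ _).mpr h), ?_⟩
  refine (ZMod.intCast_eq_intCast_iff _ _ 3).mp ?_
  push_cast
  exact (Rat.intCast_num_eq_mul_den_of_cast_eq hαden hαcast).symm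

theorem three_free_alpha_partition_mod_three (α : ℚ) (hα : 0 < α)
    (A : Finset ℕ) (n : ℕ)
    (hpos : ∀ a ∈ A, 0 < a) (hfree : ∀ a ∈ A, ¬ (3 ∣ a))
    (hrecip : ∑ a ∈ A, (1 : ℚ) / a = α)
    (hsum : ∑ a ∈ A, a = n) :
    ¬ (3 ∣ α.den) ∧ (n * α.den : ℤ) ≡ α.num [ZMOD 3] :=
  three_free_alpha_partition_mod_three_general α A n hfree hrecip hsum
end

section
/- If M is a positive integer whose largest prime divisor is 7, then either M ≤ 28, or M is divisible by at least one of 35, 42, 49, 56, 63. -/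
theorem Nat.dvd_of_forall_exists_pow_dvd_not_pow_succ_dvd {M N : ℕ}
    (h : ∀ p, p.Prime → p ∣ M → ∃ k, p ^ k ∣ N ∧ ¬ p ^ (k + 1) ∣ M) : M ∣ N := by
  refine (Nat.dvd_iff_prime_pow_dvd_dvd N M).mpr fun p j hp hpj => ?_
  rcases Nat.eq_zero_or_pos j with rfl | hj
  · exact one_dvd N
  obtain ⟨k, hkN, hkM⟩ := h p hp (dvd_of_pow_dvd hj hpj)
  have hjk : j ≤ k := by
    by_contra! hkj
    exact hkM ((pow_dvd_pow p hkj).trans hpj)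
  exact (pow_dvd_pow p hjk).trans hkN

theorem le_28_or_42_dvd_of_dvd_84 {M : ℕ} (h84 : M ∣ 84) (h7 : 7 ∣ M) :
    M ≤ 28 ∨ 42 ∣ M := by
  obtain ⟨c, rfl⟩ := h7
  have hc : c ∣ 12 := Nat.dvd_of_mul_dvd_mul_left (by norm_num) (show 7 * c ∣ 7 * 12 from h84)
  have hc12 : c ≤ 12 := Nat.le_of_dvd (by norm_num) hc
  interval_cases c <;> omega

theorem largest_prime_divisor_seven_general (M : ℕ)
    (h7 : 7 ∣ M) (hsmooth : ∀ p : ℕ, p.Prime → p ∣ M → p ≤ 7) :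
    M ≤ 28 ∨ 35 ∣ M ∨ 42 ∣ M ∨ 49 ∣ M ∨ 56 ∣ M ∨ 63 ∣ M := by
  by_cases h5 : 5 ∣ M
  · exact Or.inr (Or.inl (Nat.Coprime.mul_dvd_of_dvd_of_dvd (by norm_num) h5 h7))
  by_cases h49 : 49 ∣ M
  · exact Or.inr (Or.inr (Or.inr (Or.inl h49)))
  by_cases h8 : 8 ∣ M
  · exact Or.inr (Or.inr (Or.inr (Or.inr (Or.inl
      (Nat.Coprime.mul_dvd_of_dvd_of_dvd (by norm_num) h8 h7)))))
  by_cases h9 : 9 ∣ M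
  · exact Or.inr (Or.inr (Or.inr (Or.inr (Or.inr
      (Nat.Coprime.mul_dvd_of_dvd_of_dvd (by norm_num) h9 h7)))))
  -- `84 = 2^2 * 3 * 7` collects the largest admissible power of each prime up to 7.
  have h84 : M ∣ 84 := by
    refine Nat.dvd_of_forall_exists_pow_dvd_not_pow_succ_dvd fun p hp hpM => ?_
    have hp7 := hsmooth p hp hpM
    have hp2 := hp.two_le
    interval_cases p
    · exact ⟨2, by norm_num, h8⟩
    · exact ⟨1, by norm_num, h9⟩
    · exact absurd hp (by norm_num)
    · exact absurd hpM h5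
    · exact absurd hp (by norm_num)
    · exact ⟨1, by norm_num, h49⟩
  rcases le_28_or_42_dvd_of_dvd_84 h84 h7 with hle | h42
  · exact Or.inl hle
  · exact Or.inr (Or.inr (Or.inl h42))

theorem largest_prime_divisor_seven (M : ℕ) (hM : 0 < M)
    (h7 : 7 ∣ M) (hsmooth : ∀ p : ℕ, p.Prime → p ∣ M → p ≤ 7) :
    M ≤ 28 ∨ 35 ∣ M ∨ 42 ∣ M ∨ 49 ∣ M ∨ 56 ∣ M ∨ 63 ∣ M :=
  largest_prime_divisor_seven_general M h7 hsmooth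
end

section
/- Metatheorem on α-partitions: Let S be a set of positive rationals and Q a property of finite sets of positive integers. Suppose for each α ∈ S there are given l ≥ 1, positive integers m_1,...,m_l, rationals β_1,...,β_l ∈ S, and finite sets of positive integers A_1,...,A_l, satisfying: (1) β_i ∈ S; (2) for every positive integer n there is an i with n ≡ Σ A_i (mod m_i); (3) α = Σ_{a∈A_i} 1/a + β_i/m_i for all i; (4) for every β_i-partition B with property Q, A_i ∩ m_i·B = ∅; (5) for every β_i-partition B with property Q, A_i ∪ m_i·B has property Q. Suppose further X is a positive integer such that for all α ∈ S and all n with X ≤ n ≤ max_{i,α}(Σ A_i + m_i(X−1)), an α-partition of n with property Q exists. Then for every α ∈ S and every n ≥ X, an α-partition of n with property Q exists. -/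
/-! Strong induction on `n`. Above the base range, pick `i` with `n ≡ Σ Aᵢ (mod mᵢ)` and write
`n = Σ Aᵢ + mᵢ n'`; then `X ≤ n' < n` (as `mᵢ ≥ 2` or `Σ Aᵢ > 0`), so some `βᵢ`-partition `B`
of `n'` with property `Q` exists, and `Aᵢ ∪ mᵢ·B` is an `α`-partition of `n` with property `Q`. -/

/-- `A` is an `α`-partition of `n`: a finite set of distinct positive integers
with element sum `n` and reciprocal sum `α`. -/
def IsPartitionOf (α : ℚ) (n : ℕ) (A : Finset ℕ) : Prop :=
  (∀ a ∈ A, 0 < a) ∧ (∑ a ∈ A, a = n) ∧ (∑ a ∈ A, (1 : ℚ) / a = α)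

lemma IsPartitionOf.union_image_mul {β : ℚ} {n' m : ℕ} {A B : Finset ℕ}
    (hB : IsPartitionOf β n' B) (hm : 0 < m) (hA : ∀ a ∈ A, 0 < a)
    (hdisj : Disjoint A (B.image (m * ·))) :
    IsPartitionOf ((∑ a ∈ A, (1 : ℚ) / a) + β / m) ((∑ a ∈ A, a) + m * n')
      (A ∪ B.image (m * ·)) := by
  obtain ⟨hBpos, hBsum, hBrec⟩ := hB
  have hinj : Set.InjOn (m * ·) B := fun x _ y _ hxy => Nat.eq_of_mul_eq_mul_left hm hxy
  refine ⟨?_, ?_, ?_⟩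
  · simp only [Finset.mem_union, Finset.mem_image]
    rintro _ (ha | ⟨b, hb, rfl⟩)
    exacts [hA _ ha, Nat.mul_pos hm (hBpos b hb)]
  · rw [Finset.sum_union hdisj, Finset.sum_image hinj, ← Finset.mul_sum, hBsum]
  · rw [Finset.sum_union hdisj, Finset.sum_image hinj, ← hBrec, Finset.sum_div]
    congr 1
    refine Finset.sum_congr rfl fun b _ => ?_
    push_cast
    rw [div_div, mul_comm]

lemma exists_eq_add_mul_lt_of_mod_eq {n s m X : ℕ} (hmod : n % m = s % m)
    (hlarge : s + m * (X - 1) < n) (hs : m = 1 → 0 < s) :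
    ∃ n', n = s + m * n' ∧ X ≤ n' ∧ n' < n := by
  have hdvd : m ∣ n - s := (Nat.modEq_iff_dvd' (by omega)).mp hmod.symm
  obtain ⟨n', hn'⟩ := hdvd
  have hXn' : X ≤ n' := by
    by_contra! h
    have : m * n' ≤ m * (X - 1) := Nat.mul_le_mul_left m (by omega)
    omega
  refine ⟨n', by omega, hXn', ?_⟩
  rcases Nat.lt_trichotomy m 1 with hm | hm | hm
  · simp_all -- `m = 0` would force `n = s`
  · have := hs hm
    subst hm
    omega
  · have : 2 * n' ≤ m * n' := Nat.mul_le_mul_right n' hm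
    omega

theorem metatheorem_general
    (S : Set ℚ)
    (Q : Finset ℕ → Prop)
    (l : ℚ → ℕ) (m : ℚ → ℕ → ℕ) (β : ℚ → ℕ → ℚ) (A : ℚ → ℕ → Finset ℕ)
    (hmpos : ∀ α ∈ S, ∀ i < l α, 0 < m α i)
    (hApos : ∀ α ∈ S, ∀ i < l α, ∀ a ∈ A α i, 0 < a)
    (hAne : ∀ α ∈ S, ∀ i < l α, m α i = 1 → (A α i).Nonempty)
    (h1 : ∀ α ∈ S, ∀ i < l α, β α i ∈ S)
    (h2 : ∀ α ∈ S, ∀ n : ℕ, 0 < n →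
      ∃ i < l α, n % m α i = (∑ a ∈ A α i, a) % m α i)
    (h3 : ∀ α ∈ S, ∀ i < l α,
      α = (∑ a ∈ A α i, (1 : ℚ) / a) + β α i / m α i)
    (h4 : ∀ α ∈ S, ∀ i < l α, ∀ n' : ℕ, ∀ B : Finset ℕ,
      IsPartitionOf (β α i) n' B → Q B →
      Disjoint (A α i) (B.image fun b => m α i * b))
    (h5 : ∀ α ∈ S, ∀ i < l α, ∀ n' : ℕ, ∀ B : Finset ℕ,
      IsPartitionOf (β α i) n' B → Q B →
      Q (A α i ∪ B.image fun b => m α i * b))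
    (X : ℕ) (hX : 0 < X)
    (hbase : ∀ α ∈ S, ∀ n : ℕ, X ≤ n →
      (∃ α' ∈ S, ∃ j < l α', n ≤ (∑ a ∈ A α' j, a) + m α' j * (X - 1)) →
      ∃ B : Finset ℕ, IsPartitionOf α n B ∧ Q B) :
    ∀ α ∈ S, ∀ n : ℕ, X ≤ n → ∃ B : Finset ℕ, IsPartitionOf α n B ∧ Q B := by
  intro α hα n
  induction n using Nat.strong_induction_on generalizing α with
  | _ n ih =>
  intro hn
  by_cases hsmall : ∃ α' ∈ S, ∃ j < l α', n ≤ (∑ a ∈ A α' j, a) + m α' j * (X - 1)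
  · exact hbase α hα n hn hsmall
  push Not at hsmall
  obtain ⟨i, hi, hmod⟩ := h2 α hα n (hX.trans_le hn)
  have hsum_pos : m α i = 1 → 0 < ∑ a ∈ A α i, a := fun hm1 =>
    Finset.sum_pos (hApos α hα i hi) (hAne α hα i hi hm1)
  obtain ⟨n', rfl, hXn', hn'n⟩ :=
    exists_eq_add_mul_lt_of_mod_eq hmod (hsmall α hα i hi) hsum_pos
  obtain ⟨B, hB, hQB⟩ := ih n' hn'n (β α i) (h1 α hα i hi) hXn'
  have hpart :=
    hB.union_image_mul (hmpos α hα i hi) (hApos α hα i hi) (h4 α hα i hi n' B hB hQB)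
  rw [← h3 α hα i hi] at hpart
  exact ⟨_, hpart, h5 α hα i hi n' B hB hQB⟩

theorem metatheorem
    (S : Set ℚ) (hS : ∀ α ∈ S, 0 < α)
    (Q : Finset ℕ → Prop)
    (l : ℚ → ℕ) (m : ℚ → ℕ → ℕ) (β : ℚ → ℕ → ℚ) (A : ℚ → ℕ → Finset ℕ)
    (hl : ∀ α ∈ S, 1 ≤ l α)
    (hmpos : ∀ α ∈ S, ∀ i < l α, 0 < m α i)
    (hApos : ∀ α ∈ S, ∀ i < l α, ∀ a ∈ A α i, 0 < a)
    (hAne : ∀ α ∈ S, ∀ i < l α, m α i = 1 → (A α i).Nonempty)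
    (h1 : ∀ α ∈ S, ∀ i < l α, β α i ∈ S)
    (h2 : ∀ α ∈ S, ∀ n : ℕ, 0 < n →
      ∃ i < l α, n % m α i = (∑ a ∈ A α i, a) % m α i)
    (h3 : ∀ α ∈ S, ∀ i < l α,
      α = (∑ a ∈ A α i, (1 : ℚ) / a) + β α i / m α i)
    (h4 : ∀ α ∈ S, ∀ i < l α, ∀ n' : ℕ, ∀ B : Finset ℕ,
      IsPartitionOf (β α i) n' B → Q B →
      Disjoint (A α i) (B.image fun b => m α i * b))
    (h5 : ∀ α ∈ S, ∀ i < l α, ∀ n' : ℕ, ∀ B : Finset ℕ,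
      IsPartitionOf (β α i) n' B → Q B →
      Q (A α i ∪ B.image fun b => m α i * b))
    (X : ℕ) (hX : 0 < X)
    (hbase : ∀ α ∈ S, ∀ n : ℕ, X ≤ n →
      (∃ α' ∈ S, ∃ j < l α', n ≤ (∑ a ∈ A α' j, a) + m α' j * (X - 1)) →
      ∃ B : Finset ℕ, IsPartitionOf α n B ∧ Q B) :
    ∀ α ∈ S, ∀ n : ℕ, X ≤ n → ∃ B : Finset ℕ, IsPartitionOf α n B ∧ Q B :=
  metatheorem_general S Q l m β A hmpos hApos hAne h1 h2 h3 h4 h5 X hX hbase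
end
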